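/- arXiv:2112.08822 — 2 statements merged into one kernel-verified Lean document; each statement's English description precedes it below -/
import Mathlib

section
/- For every α ≥ 1 and every r ∈ (0,1), the quantity f_α(r) := Σ_{j=0}^{⌈(1-r)/(2r)⌉ - 1} [((2j+2)/(1+r))^α − ((2j)/(1−r))^α] satisfies 0 < f_α(r) ≤ r^{−α}. -/
open Finset

/- Each summand is positive because 2j/(1-r) < (2j+2)/(1+r) is equivalent to 2jr < 1 - r, i.e. to
j < (1-r)/(2r). For the upper bound, replacing 1 - r by 1 + r in the subtracted terms turns the sum
into a telescoping sum with value (2N/(1+r))^α, N = ⌈(1-r)/(2r)⌉, and 2Nr < 1 + r. -/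

noncomputable def levyF (α r : ℝ) : ℝ :=
  ∑ j ∈ Finset.range ⌈(1 - r) / (2 * r)⌉₊,
    (((2 * (j : ℝ) + 2) / (1 + r)) ^ α - ((2 * (j : ℝ)) / (1 - r)) ^ α)

section

variable {α r : ℝ}

lemma two_mul_div_one_sub_lt {x : ℝ} (hr : -1 < r) (hr1 : r < 1) (hx : x * (2 * r) < 1 - r) :
    2 * x / (1 - r) < (2 * x + 2) / (1 + r) := by
  rw [div_lt_div_iff₀ (by linarith) (by linarith)]
  nlinarith

lemma two_mul_ceil_div_le_inv (hr0 : 0 < r) (hr1 : r < 1) :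
    2 * (⌈(1 - r) / (2 * r)⌉₊ : ℝ) / (1 + r) ≤ r⁻¹ := by
  have hceil : (⌈(1 - r) / (2 * r)⌉₊ : ℝ) * (2 * r) < 1 + r := by
    have h := Nat.ceil_lt_add_one (div_pos (sub_pos.mpr hr1) (by positivity : 0 < 2 * r)).le
    have hmul : (1 - r) / (2 * r) * (2 * r) = 1 - r := div_mul_cancel₀ _ (by positivity)
    nlinarith
  rw [div_le_iff₀ (by linarith), inv_mul_eq_div, le_div_iff₀ hr0]
  linarith

theorem levyF_pos (hα : 0 < α) (hr0 : 0 < r) (hr1 : r < 1) : 0 < levyF α r := by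
  have hN : 0 < ⌈(1 - r) / (2 * r)⌉₊ := Nat.ceil_pos.mpr (div_pos (by linarith) (by linarith))
  refine Finset.sum_pos (fun j hj ↦ sub_pos.mpr ?_) ⟨0, Finset.mem_range.mpr hN⟩
  have hj : (j : ℝ) * (2 * r) < 1 - r :=
    (lt_div_iff₀ (by linarith)).mp (Nat.lt_ceil.mp (Finset.mem_range.mp hj))
  exact Real.rpow_lt_rpow (div_nonneg (by positivity) (by linarith))
    (two_mul_div_one_sub_lt (by linarith) hr1 hj) hα

theorem levyF_le_rpow_two_mul_ceil_div (hα : 0 < α) (hr0 : 0 < r) (hr1 : r < 1) :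
    levyF α r ≤ (2 * (⌈(1 - r) / (2 * r)⌉₊ : ℝ) / (1 + r)) ^ α := by
  set g : ℕ → ℝ := fun k ↦ (2 * (k : ℝ) / (1 + r)) ^ α
  calc levyF α r ≤ ∑ j ∈ range ⌈(1 - r) / (2 * r)⌉₊, (g (j + 1) - g j) := by
        refine Finset.sum_le_sum fun j _ ↦ ?_
        have hshift : ((2 * (j : ℝ)) / (1 + r)) ^ α ≤ ((2 * (j : ℝ)) / (1 - r)) ^ α :=
          Real.rpow_le_rpow (by positivity)
            (div_le_div_of_nonneg_left (by positivity) (by linarith) (by linarith)) hα.le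
        simp only [g, Nat.cast_succ, mul_add, mul_one]
        linarith
    _ = g ⌈(1 - r) / (2 * r)⌉₊ := by
        rw [Finset.sum_range_sub]
        simp [g, Real.zero_rpow hα.ne']

end

/-- For α ≥ 1 and r ∈ (0,1), one has 0 < f_α(r) ≤ r^{−α}. -/
theorem levyF_pos_le (α r : ℝ) (hα : 1 ≤ α) (hr0 : 0 < r) (hr1 : r < 1) :
    0 < levyF α r ∧ levyF α r ≤ r ^ (-α) := by
  have hα0 : 0 < α := zero_lt_one.trans_le hα
  refine ⟨levyF_pos hα0 hr0 hr1, (levyF_le_rpow_two_mul_ceil_div hα0 hr0 hr1).trans ?_⟩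
  rw [Real.rpow_neg hr0.le, ← Real.inv_rpow hr0.le]
  exact Real.rpow_le_rpow (by positivity) (two_mul_ceil_div_le_inv hr0 hr1) hα0.le
end

section
/- As r → 0⁺, f_α(r) is asymptotically equivalent to 1/((α+1) r^α), i.e., lim_{r→0⁺} (α+1) r^α f_α(r) = 1. -/
/-
Write `c± = 2 / (1 ± r)` and `N = ⌈(1 - r) / (2r)⌉`. Telescoping the summands gives
`f_α(r) = (c₊ N)^α + (c₊^α - c₋^α) Σ_{j<N} j^α`, hence
`r^α f_α(r) = (2rN / (1 + r))^α + ((1 + r)^(-α) - (1 - r)^(-α)) / (2r) · (2r)^(α+1) Σ_{j<N} j^α`.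
As `r → 0⁺` we have `2rN → 1`, the difference quotient tends to the derivative `-2α`, and comparing
the sum with `∫₀^N x^α dx` gives `(2r)^(α+1) Σ_{j<N} j^α → 1 / (α + 1)`.
So `(α + 1) r^α f_α(r) → (α + 1) - α = 1`.
-/

open Filter

open Topology Finset

theorem sum_range_rpow_le {α : ℝ} (hα : 0 ≤ α) (N : ℕ) :
    ∑ j ∈ range N, (j : ℝ) ^ α ≤ (N : ℝ) ^ (α + 1) / (α + 1) := by
  have hmono : MonotoneOn (fun x : ℝ => x ^ α) (Set.Icc 0 (0 + N)) :=
    (Real.monotoneOn_rpow_Ici_of_exponent_nonneg hα).mono Set.Icc_subset_Ici_self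
  have hint := hmono.sum_le_integral
  simp only [zero_add] at hint
  rwa [integral_rpow (Or.inl (by linarith)), Real.zero_rpow (by linarith), sub_zero] at hint

theorem sub_le_sum_range_rpow {α : ℝ} (hα : 0 ≤ α) (N : ℕ) :
    (N : ℝ) ^ (α + 1) / (α + 1) - (N : ℝ) ^ α ≤ ∑ j ∈ range N, (j : ℝ) ^ α := by
  have hmono : MonotoneOn (fun x : ℝ => x ^ α) (Set.Icc 0 (0 + N)) :=
    (Real.monotoneOn_rpow_Ici_of_exponent_nonneg hα).mono Set.Icc_subset_Ici_self
  have hint := hmono.integral_le_sum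
  simp only [zero_add] at hint
  rw [integral_rpow (Or.inl (by linarith)), Real.zero_rpow (by linarith), sub_zero] at hint
  have hsucc := sum_range_succ (fun j : ℕ => (j : ℝ) ^ α) N
  rw [sum_range_succ'] at hsucc
  push_cast at hint hsucc
  linarith [Real.rpow_nonneg (le_refl (0 : ℝ)) α]

theorem tendsto_mul_natCeil_div {ι : Type*} {l : Filter ι} {g h : ι → ℝ} {a : ℝ}
    (hh : Tendsto h l (𝓝[>] 0)) (hg : Tendsto g l (𝓝 a)) (ha : 0 < a) :
    Tendsto (fun i => h i * ⌈g i / h i⌉₊) l (𝓝 a) := by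
  have hh0 : Tendsto h l (𝓝 0) := tendsto_nhds_of_tendsto_nhdsWithin hh
  have hpos : ∀ᶠ i in l, 0 < h i ∧ 0 < g i :=
    (tendsto_nhdsWithin_iff.mp hh).2.and (hg.eventually (lt_mem_nhds ha))
  refine tendsto_of_tendsto_of_tendsto_of_le_of_le' hg (by simpa using hg.add hh0) ?_ ?_
  · filter_upwards [hpos] with i hi
    exact (div_le_iff₀' hi.1).mp (Nat.le_ceil _)
  · filter_upwards [hpos] with i ⟨hhi, hgi⟩
    have hceil := Nat.ceil_lt_add_one (div_pos hgi hhi).le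
    rw [div_add_one hhi.ne', lt_div_iff₀' hhi] at hceil
    exact hceil.le

theorem tendsto_rpow_mul_sum_range_rpow {ι : Type*} {l : Filter ι} {h : ι → ℝ} {N : ι → ℕ}
    {α c : ℝ} (hα : 0 ≤ α) (hh : Tendsto h l (𝓝[>] 0))
    (hN : Tendsto (fun i => h i * N i) l (𝓝 c)) :
    Tendsto (fun i => h i ^ (α + 1) * ∑ j ∈ range (N i), (j : ℝ) ^ α) l
      (𝓝 (c ^ (α + 1) / (α + 1))) := by
  have hh0 : Tendsto h l (𝓝 0) := tendsto_nhds_of_tendsto_nhdsWithin hh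
  have hpos : ∀ᶠ i in l, 0 < h i := (tendsto_nhdsWithin_iff.mp hh).2
  have hupper := (hN.rpow_const (Or.inr (by linarith : 0 ≤ α + 1))).div_const (α + 1)
  have hlower : Tendsto (fun i => (h i * N i) ^ (α + 1) / (α + 1) - h i * (h i * N i) ^ α) l
      (𝓝 (c ^ (α + 1) / (α + 1))) := by
    simpa using hupper.sub (hh0.mul (hN.rpow_const (Or.inr hα)))
  refine tendsto_of_tendsto_of_tendsto_of_le_of_le' hlower hupper ?_ ?_
  · filter_upwards [hpos] with i hi
    calc (h i * N i) ^ (α + 1) / (α + 1) - h i * (h i * N i) ^ α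
        = h i ^ (α + 1) * ((N i : ℝ) ^ (α + 1) / (α + 1) - (N i : ℝ) ^ α) := by
          rw [Real.mul_rpow hi.le (Nat.cast_nonneg _), Real.mul_rpow hi.le (Nat.cast_nonneg _),
            Real.rpow_add_one hi.ne']
          ring
      _ ≤ _ := mul_le_mul_of_nonneg_left (sub_le_sum_range_rpow hα (N i))
          (Real.rpow_nonneg hi.le _)
  · filter_upwards [hpos] with i hi
    rw [Real.mul_rpow hi.le (Nat.cast_nonneg _), mul_div_assoc]
    exact mul_le_mul_of_nonneg_left (sum_range_rpow_le hα (N i)) (Real.rpow_nonneg hi.le _)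

theorem tendsto_one_add_rpow_neg_sub_one_sub_rpow_neg_div (α : ℝ) :
    Tendsto (fun r : ℝ => ((1 + r) ^ (-α) - (1 - r) ^ (-α)) / r) (𝓝[≠] 0) (𝓝 (-(2 * α))) := by
  have hplus : HasDerivAt (fun r : ℝ => (1 + r) ^ (-α)) (-α) 0 := by
    simpa using ((hasDerivAt_id (0 : ℝ)).const_add 1).rpow_const (p := -α) (Or.inl (by norm_num))
  have hminus : HasDerivAt (fun r : ℝ => (1 - r) ^ (-α)) α 0 := by
    simpa using ((hasDerivAt_id (0 : ℝ)).const_sub 1).rpow_const (p := -α) (Or.inl (by norm_num))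
  have hslope := hasDerivAt_iff_tendsto_slope.mp (hplus.sub hminus)
  rw [show -α - α = -(2 * α) by ring] at hslope
  refine hslope.congr fun r => ?_
  simp [slope_def_field]

theorem sum_range_mul_succ_rpow_sub {α a b : ℝ} (hα : α ≠ 0) (ha : 0 ≤ a) (hb : 0 ≤ b) (N : ℕ) :
    ∑ j ∈ range N, ((a * (j + 1)) ^ α - (b * j) ^ α) =
      (a * N) ^ α + (a ^ α - b ^ α) * ∑ j ∈ range N, (j : ℝ) ^ α := by
  have htelescope := sum_range_sub (fun j : ℕ => (j : ℝ) ^ α) N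
  simp only [Nat.cast_succ, Nat.cast_zero, Real.zero_rpow hα, sub_zero] at htelescope
  simp only [Real.mul_rpow ha (Nat.cast_add_one_pos _).le, Real.mul_rpow hb (Nat.cast_nonneg _),
    Real.mul_rpow ha (Nat.cast_nonneg N), ← htelescope, mul_sum, ← sum_add_distrib]
  exact sum_congr rfl fun j _ => by ring

theorem rpow_mul_levyF {α r : ℝ} (hα : α ≠ 0) (hr0 : 0 < r) (hr1 : r < 1) :
    r ^ α * levyF α r = (2 * r * ⌈(1 - r) / (2 * r)⌉₊ / (1 + r)) ^ α +
      ((1 + r) ^ (-α) - (1 - r) ^ (-α)) / r / 2 *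
        ((2 * r) ^ (α + 1) * ∑ j ∈ range ⌈(1 - r) / (2 * r)⌉₊, (j : ℝ) ^ α) := by
  have hplus : 0 < 1 + r := by linarith
  have hminus : 0 < 1 - r := by linarith
  have hsum := sum_range_mul_succ_rpow_sub hα (div_pos two_pos hplus).le
    (div_pos two_pos hminus).le ⌈(1 - r) / (2 * r)⌉₊
  have hterm : ∀ j : ℝ, (2 * j + 2) / (1 + r) = 2 / (1 + r) * (j + 1) ∧
      2 * j / (1 - r) = 2 / (1 - r) * j := fun j => ⟨by field_simp, by field_simp⟩
  simp only [levyF, hterm, hsum]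
  rw [Real.mul_rpow (by positivity) (by positivity), Real.div_rpow two_pos.le hplus.le,
    Real.div_rpow two_pos.le hminus.le, Real.div_rpow (by positivity) hplus.le,
    Real.mul_rpow (by positivity) (by positivity), Real.mul_rpow two_pos.le hr0.le,
    Real.rpow_add_one (by positivity), Real.mul_rpow two_pos.le hr0.le,
    Real.rpow_neg hplus.le, Real.rpow_neg hminus.le]
  field_simp

/-- As r → 0⁺, f_α(r) ~ 1/((α+1) r^α), i.e. (α+1) r^α f_α(r) → 1. -/
theorem levyF_asymptotic (α : ℝ) (hα : 1 ≤ α) :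
    Tendsto (fun r : ℝ => (α + 1) * r ^ α * levyF α r)
      (nhdsWithin 0 (Set.Ioi 0)) (nhds 1) := by
  have hid : Tendsto (fun r : ℝ => r) (𝓝[>] 0) (𝓝 0) := nhdsWithin_le_nhds
  have h2r : Tendsto (fun r : ℝ => 2 * r) (𝓝[>] 0) (𝓝[>] 0) :=
    tendsto_nhdsWithin_of_tendsto_nhds_of_eventually_within _
      (by simpa using hid.const_mul 2) (eventually_nhdsWithin_of_forall fun r hr => by
        simpa using hr)
  have hN : Tendsto (fun r : ℝ => 2 * r * ⌈(1 - r) / (2 * r)⌉₊) (𝓝[>] 0) (𝓝 1) :=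
    tendsto_mul_natCeil_div h2r (by simpa using hid.const_sub 1) one_pos
  have hfirst : Tendsto (fun r : ℝ => (2 * r * ⌈(1 - r) / (2 * r)⌉₊ / (1 + r)) ^ α)
      (𝓝[>] 0) (𝓝 1) := by
    simpa using (hN.div (hid.const_add 1) (by norm_num)).rpow_const (Or.inl (by norm_num))
  have hsum := tendsto_rpow_mul_sum_range_rpow (by linarith) h2r hN
  have hslope := (tendsto_one_add_rpow_neg_sub_one_sub_rpow_neg_div α).mono_left
    (nhdsGT_le_nhdsNE 0)
  have hlim := (hfirst.add ((hslope.div_const 2).mul hsum)).const_mul (α + 1)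
  rw [Real.one_rpow, show (α + 1) * (1 + -(2 * α) / 2 * (1 / (α + 1))) = 1 by
    field_simp; ring] at hlim
  refine hlim.congr' ?_
  filter_upwards [Ioo_mem_nhdsGT one_pos] with r hr
  rw [mul_assoc (α + 1), rpow_mul_levyF (by linarith) hr.1 hr.2]
end
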